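/- Let A be a local MV-algebra with unique maximal filter M. Then for every m ∈ M, ¬m ≤ m. -/

import Mathlib

/-- An MV-algebra `(A, ⊕, ¬, 0)`. -/
class MV (A : Type*) extends Zero A where
  oplus : A → A → A
  mvneg : A → A
  oplus_assoc : ∀ x y z : A, oplus (oplus x y) z = oplus x (oplus y z)
  oplus_comm : ∀ x y : A, oplus x y = oplus y x
  oplus_zero : ∀ x : A, oplus x 0 = x
  mvneg_mvneg : ∀ x : A, mvneg (mvneg x) = x
  oplus_top : ∀ x : A, oplus x (mvneg 0) = mvneg 0
  luk : ∀ x y : A, oplus (mvneg (oplus (mvneg x) y)) y = oplus (mvneg (oplus (mvneg y) x)) x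

namespace MV

variable {A : Type*} [MV A]

/-- The top element `1 = ¬0`. -/
def top : A := mvneg 0
/-- `x → y := ¬x ⊕ y`. -/
def imp (x y : A) : A := oplus (mvneg x) y
/-- `x ⊙ y := ¬(¬x ⊕ ¬y)`. -/
def odot (x y : A) : A := mvneg (oplus (mvneg x) (mvneg y))
/-- `x ⊖ y := ¬(¬x ⊕ y)`. -/
def ominus (x y : A) : A := mvneg (oplus (mvneg x) y)
/-- Lattice join `x ∨ y := (x → y) → y`. -/
def mvsup (x y : A) : A := imp (imp x y) y
/-- Lattice meet `x ∧ y := x ⊙ (x → y)`. -/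
def mvinf (x y : A) : A := odot x (imp x y)
/-- The lattice order: `x ≤ y` iff `x → y = 1`. -/
def mvle (x y : A) : Prop := imp x y = top
/-- Strict order. -/
def mvlt (x y : A) : Prop := mvle x y ∧ x ≠ y

/-- `(A, τ)` is an SMV-algebra. -/
structure IsSMV (τ : A → A) : Prop where
  map_top : τ top = top
  tau_oplus : ∀ x y : A, τ (oplus x y) = oplus (τ x) (τ (ominus y (odot x y)))
  map_neg : ∀ x : A, τ (mvneg x) = mvneg (τ x)
  tau_fix : ∀ x y : A, τ (oplus (τ x) (τ y)) = oplus (τ x) (τ y)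

/-- `(A, τ)` is a state morphism MV-algebra. -/
def IsSMMV (τ : A → A) : Prop := IsSMV τ ∧ ∀ x y : A, τ (oplus x y) = oplus (τ x) (τ y)

/-- An MV-filter. -/
structure IsFilter (F : Set A) : Prop where
  top_mem : top ∈ F
  mp : ∀ a b : A, a ∈ F → imp a b ∈ F → b ∈ F

/-- A `τ`-filter: an MV-filter closed under `τ`. -/
def IsTauFilter (τ : A → A) (F : Set A) : Prop := IsFilter F ∧ ∀ a ∈ F, τ a ∈ F

/-- Subdirect irreducibility of an SMV-algebra: there is a minimum nontrivial `τ`-filter. -/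
def SubdirIrrSMV (τ : A → A) : Prop :=
  ∃ F : Set A, IsTauFilter τ F ∧ F ≠ {top} ∧
    ∀ G : Set A, IsTauFilter τ G → G ≠ {top} → F ⊆ G

/-- A filter of the subalgebra/subhoop with universe `S`. -/
def IsFilterOn (S F : Set A) : Prop :=
  F ⊆ S ∧ top ∈ F ∧ ∀ a b : A, a ∈ F → b ∈ S → imp a b ∈ F → b ∈ F

/-- Subdirect irreducibility of the subalgebra/subhoop with universe `S`:
there is a minimum nontrivial filter on `S`. -/
def SubdirIrrOn (S : Set A) : Prop :=
  ∃ F : Set A, IsFilterOn S F ∧ F ≠ {top} ∧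
    ∀ G : Set A, IsFilterOn S G → G ≠ {top} → F ⊆ G

/-- The set `F_τ(A) = {a : τ a = 1}`. -/
def tauKernel (τ : A → A) : Set A := {a : A | τ a = top}

/-- Homomorphisms of MV-algebras. -/
structure IsMVHom {A B : Type*} [MV A] [MV B] (f : A → B) : Prop where
  map_oplus : ∀ x y : A, f (oplus x y) = oplus (f x) (f y)
  map_neg : ∀ x : A, f (mvneg x) = mvneg (f x)
  map_zero : f 0 = 0

end MV

open MV

instance MV.instProd {A B : Type*} [MV A] [MV B] : MV (A × B) where
  oplus x y := (oplus x.1 y.1, oplus x.2 y.2)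
  mvneg x := (mvneg x.1, mvneg x.2)
  oplus_assoc x y z := by simp [oplus_assoc]
  oplus_comm x y := by simp [oplus_comm x.1 y.1, oplus_comm x.2 y.2]
  oplus_zero x := by simp [oplus_zero]
  mvneg_mvneg x := by simp [mvneg_mvneg]
  oplus_top x := by simp [oplus_top]
  luk x y := by simp [luk]

instance MV.instPi {I : Type*} {A : I → Type*} [∀ i, MV (A i)] : MV (∀ i, A i) where
  oplus x y i := oplus (x i) (y i)
  mvneg x i := mvneg (x i)
  oplus_assoc x y z := by funext i; simp [oplus_assoc]
  oplus_comm x y := by funext i; exact oplus_comm _ _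
  oplus_zero x := by funext i; exact oplus_zero _
  mvneg_mvneg x := by funext i; exact mvneg_mvneg _
  oplus_top x := by funext i; exact oplus_top _
  luk x y := by funext i; exact luk _ _

/-- A proper filter: a filter not containing `0`. -/
def IsProperFilter {A : Type*} [MV A] (F : Set A) : Prop :=
  MV.IsFilter F ∧ (0 : A) ∉ F

/-- A maximal filter: a proper filter maximal among proper filters. -/
def IsMaximalFilter {A : Type*} [MV A] (F : Set A) : Prop :=
  IsProperFilter F ∧ ∀ G : Set A, IsProperFilter G → F ⊆ G → G = F

/-! For `m ∈ M`, the element `¬(m²)` cannot generate a proper filter: by locality that filter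
would lie in `M` together with `m²`, forcing `0 = m² ⊙ ¬(m²) ∈ M`. Hence `k·m² = 1` for some `k`.
Since `2m ⊕ m² = 2m` in every MV-algebra (in `[0,1]`, either `m² = 0` or `2m = 1`), we get
`2m = 1`, which is `¬m ≤ m`. -/

namespace MV

variable {A : Type*} [MV A]

instance : Std.Associative (oplus (A := A)) := ⟨oplus_assoc⟩

instance : Std.Commutative (oplus (A := A)) := ⟨oplus_comm⟩

lemma zero_oplus (x : A) : oplus 0 x = x := by
  rw [oplus_comm, oplus_zero]

lemma top_oplus (x : A) : oplus top x = top := by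
  rw [oplus_comm]; exact oplus_top x

lemma neg_top : (mvneg top : A) = 0 := mvneg_mvneg 0

lemma neg_oplus_self (x : A) : oplus (mvneg x) x = top := by
  have h := luk x (top : A)
  rw [show ∀ y : A, oplus y top = top from oplus_top, neg_top, zero_oplus] at h
  exact h.symm

lemma mvle_refl (x : A) : mvle x x := neg_oplus_self x

lemma mvle_iff_exists_oplus {x y : A} : mvle x y ↔ ∃ z, y = oplus x z := by
  constructor
  · intro h
    refine ⟨ominus y x, ?_⟩
    have h' : oplus (ominus x y) y = oplus (ominus y x) x := luk x y
    rwa [ominus, show oplus (mvneg x) y = top from h, neg_top, zero_oplus, oplus_comm] at h'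
  · rintro ⟨z, rfl⟩
    show oplus (mvneg x) (oplus x z) = top
    rw [← oplus_assoc, neg_oplus_self, top_oplus]

lemma mvle_oplus_right (x z : A) : mvle x (oplus x z) := mvle_iff_exists_oplus.2 ⟨z, rfl⟩

lemma mvle_trans {x y z : A} (hxy : mvle x y) (hyz : mvle y z) : mvle x z := by
  obtain ⟨u, rfl⟩ := mvle_iff_exists_oplus.1 hxy
  obtain ⟨v, rfl⟩ := mvle_iff_exists_oplus.1 hyz
  exact mvle_iff_exists_oplus.2 ⟨oplus u v, oplus_assoc x u v⟩

lemma eq_zero_of_mvle_zero {x : A} (h : mvle x 0) : x = 0 := by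
  have h' : mvneg x = top := by rw [← oplus_zero (mvneg x)]; exact h
  rw [← mvneg_mvneg x, h', neg_top]

lemma ominus_eq_zero_of_mvle {x y : A} (h : mvle x y) : ominus x y = 0 := by
  show mvneg (imp x y) = 0
  rw [h, neg_top]

lemma ominus_oplus_of_mvle {x y : A} (h : mvle x y) : oplus (ominus y x) x = y := by
  calc oplus (ominus y x) x = oplus (ominus x y) y := (luk x y).symm
    _ = y := by rw [ominus_eq_zero_of_mvle h, zero_oplus]

lemma oplus_mono_left {x y : A} (c : A) (h : mvle x y) : mvle (oplus c x) (oplus c y) := by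
  obtain ⟨z, rfl⟩ := mvle_iff_exists_oplus.1 h
  exact mvle_iff_exists_oplus.2 ⟨z, (oplus_assoc c x z).symm⟩

lemma neg_anti {x y : A} (h : mvle x y) : mvle (mvneg y) (mvneg x) := by
  show oplus (mvneg (mvneg y)) (mvneg x) = top
  rw [mvneg_mvneg, oplus_comm]
  exact h

lemma neg_odot (x y : A) : mvneg (odot x y) = oplus (mvneg x) (mvneg y) := mvneg_mvneg _

lemma odot_comm (x y : A) : odot x y = odot y x := by
  rw [odot, oplus_comm, odot]

lemma odot_assoc (x y z : A) : odot (odot x y) z = odot x (odot y z) := by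
  simp only [odot, mvneg_mvneg, oplus_assoc]

lemma odot_top (x : A) : odot x top = x := by
  rw [odot, neg_top, oplus_zero, mvneg_mvneg]

lemma odot_neg_self (x : A) : odot x (mvneg x) = 0 := by
  rw [odot, mvneg_mvneg, neg_oplus_self, neg_top]

lemma odot_mvle_right (x y : A) : mvle (odot x y) y := by
  show oplus (mvneg (odot x y)) y = top
  rw [neg_odot, oplus_assoc, neg_oplus_self]
  exact oplus_top _

lemma odot_mono {x y u v : A} (hxy : mvle x y) (huv : mvle u v) :
    mvle (odot x u) (odot y v) := by
  have hx : mvle (odot x u) (odot y u) := by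
    rw [odot_comm x, odot_comm y]
    exact neg_anti (oplus_mono_left (mvneg u) (neg_anti hxy))
  have hu : mvle (odot y u) (odot y v) := neg_anti (oplus_mono_left (mvneg y) (neg_anti huv))
  exact mvle_trans hx hu

lemma imp_odot_mvle (x y : A) : mvle (odot (imp x y) x) y := by
  have h : odot (imp x y) x = odot (imp y x) y := by
    have hluk := luk (mvneg y) (mvneg x)
    rw [mvneg_mvneg, mvneg_mvneg] at hluk
    rw [imp, imp, odot_comm, odot, odot, oplus_comm (mvneg x) y, oplus_comm (mvneg y) x,
      oplus_comm (mvneg x)]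
    exact congrArg mvneg hluk
  rw [h]
  exact odot_mvle_right _ y

def npow (x : A) : ℕ → A
  | 0 => top
  | n + 1 => odot x (npow x n)

def nsmul (x : A) : ℕ → A
  | 0 => 0
  | n + 1 => oplus x (nsmul x n)

lemma npow_one (x : A) : npow x 1 = x := odot_top x

lemma npow_add (x : A) (m n : ℕ) : npow x (m + n) = odot (npow x m) (npow x n) := by
  induction n with
  | zero => exact (odot_top _).symm
  | succ n ih =>
    show odot x (npow x (m + n)) = odot (npow x m) (odot x (npow x n))
    rw [ih, ← odot_assoc, ← odot_assoc, odot_comm x]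

lemma neg_npow (x : A) (n : ℕ) : mvneg (npow x n) = nsmul (mvneg x) n := by
  induction n with
  | zero => exact neg_top
  | succ n ih => exact (neg_odot x _).trans (congrArg _ ih)

lemma ominus_oplus_self_eq_ominus_sq (x : A) :
    ominus (oplus x x) x = ominus x (odot x x) := by
  have hluk := luk x (mvneg x)
  rw [mvneg_mvneg] at hluk
  rw [ominus, ominus, ← hluk, oplus_comm]
  rfl

lemma oplus_self_oplus_sq (x : A) : oplus (oplus x x) (odot x x) = oplus x x := by
  set d := ominus x (odot x x) with hd
  have hsq : oplus d (odot x x) = x := ominus_oplus_of_mvle (odot_mvle_right x x)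
  have hdouble : oplus d x = oplus x x := by
    rw [hd, ← ominus_oplus_self_eq_ominus_sq]
    exact ominus_oplus_of_mvle (mvle_oplus_right x x)
  calc oplus (oplus x x) (odot x x)
      = oplus (oplus d (oplus d (odot x x))) (odot x x) := by rw [← hdouble, hsq]
    _ = oplus (oplus d (odot x x)) (oplus d (odot x x)) := by ac_rfl
    _ = oplus x x := by rw [hsq]

lemma oplus_self_oplus_nsmul_sq (x : A) (n : ℕ) :
    oplus (oplus x x) (nsmul (odot x x) n) = oplus x x := by
  induction n with
  | zero => exact oplus_zero _
  | succ n ih =>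
    show oplus (oplus x x) (oplus (odot x x) (nsmul (odot x x) n)) = oplus x x
    rw [← oplus_assoc, oplus_self_oplus_sq, ih]

lemma IsFilter.mem_of_mvle {F : Set A} (hF : IsFilter F) {x y : A} (hx : x ∈ F)
    (hxy : mvle x y) : y ∈ F :=
  hF.mp x y hx (hxy ▸ hF.top_mem)

lemma IsFilter.odot_mem {F : Set A} (hF : IsFilter F) {x y : A} (hx : x ∈ F) (hy : y ∈ F) :
    odot x y ∈ F := by
  have hle : mvle x (imp y (odot x y)) := by
    show oplus (mvneg x) (oplus (mvneg y) (mvneg (oplus (mvneg x) (mvneg y)))) = top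
    rw [← oplus_assoc, oplus_comm]
    exact neg_oplus_self _
  exact hF.mp y _ hy (hF.mem_of_mvle hx hle)

def principalFilter (g : A) : Set A := {x | ∃ n, mvle (npow g n) x}

lemma mem_principalFilter_self (g : A) : g ∈ principalFilter g :=
  ⟨1, by rw [npow_one]; exact mvle_refl g⟩

lemma isFilter_principalFilter (g : A) : IsFilter (principalFilter g) where
  top_mem := ⟨0, mvle_refl top⟩
  mp := by
    rintro x y ⟨m, hm⟩ ⟨n, hn⟩
    refine ⟨n + m, ?_⟩
    rw [npow_add]
    exact mvle_trans (odot_mono hn hm) (imp_odot_mvle x y)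

lemma isProperFilter_principalFilter {g : A} (hg : ∀ n, npow g n ≠ 0) :
    IsProperFilter (principalFilter g) :=
  ⟨isFilter_principalFilter g, fun ⟨n, hn⟩ => hg n (eq_zero_of_mvle_zero hn)⟩

end MV

section

variable {A : Type*} [MV A]

lemma isProperFilter_sUnion {c : Set (Set A)} (hc : IsChain (· ⊆ ·) c) (hne : c.Nonempty)
    (hcF : ∀ F ∈ c, IsProperFilter F) : IsProperFilter (⋃₀ c) := by
  obtain ⟨F₀, hF₀⟩ := hne
  refine ⟨⟨⟨F₀, hF₀, (hcF F₀ hF₀).1.top_mem⟩, ?_⟩, fun ⟨F, hF, h0⟩ => (hcF F hF).2 h0⟩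
  rintro x y ⟨F, hF, hx⟩ ⟨G, hG, hxy⟩
  obtain ⟨H, hH, hFH, hGH⟩ := hc.directedOn F hF G hG
  exact ⟨H, hH, (hcF H hH).1.mp x y (hFH hx) (hGH hxy)⟩

lemma IsProperFilter.exists_isMaximalFilter_superset {F : Set A} (hF : IsProperFilter F) :
    ∃ M, F ⊆ M ∧ IsMaximalFilter M := by
  obtain ⟨M, hFM, hM⟩ := zorn_subset_nonempty {G : Set A | IsProperFilter G}
    (fun c hcF hc hne => ⟨⋃₀ c, isProperFilter_sUnion hc hne hcF,
      fun _ => Set.subset_sUnion_of_mem⟩) F hF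
  exact ⟨M, hFM, hM.prop, fun G hG hMG => (hM.eq_of_subset hG hMG).symm⟩

lemma subset_of_existsUnique_isMaximalFilter (hloc : ∃! M : Set A, IsMaximalFilter M)
    {M : Set A} (hM : IsMaximalFilter M) {F : Set A} (hF : IsProperFilter F) : F ⊆ M := by
  obtain ⟨G, hFG, hG⟩ := hF.exists_isMaximalFilter_superset
  exact hloc.unique hG hM ▸ hFG

lemma exists_nsmul_eq_top_of_mem_of_existsUnique (hloc : ∃! M : Set A, IsMaximalFilter M)
    {M : Set A} (hM : IsMaximalFilter M) {x : A} (hx : x ∈ M) : ∃ n, nsmul x n = top := by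
  by_contra! hord
  have hproper : IsProperFilter (principalFilter (mvneg x)) := by
    refine isProperFilter_principalFilter fun n hn => hord n ?_
    rw [← mvneg_mvneg x, ← neg_npow, hn]
    rfl
  have hneg : mvneg x ∈ M :=
    subset_of_existsUnique_isMaximalFilter hloc hM hproper (mem_principalFilter_self _)
  exact hM.1.2 (odot_neg_self x ▸ hM.1.1.odot_mem hx hneg)

end

/-- if `A` is a local MV-algebra (it has exactly one maximal
filter) with maximal filter `M`, then `¬m ≤ m` for every `m ∈ M`. -/
theorem local_neg_le {A : Type*} [MV A]
    (hloc : ∃! M : Set A, IsMaximalFilter M)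
    (M : Set A) (hM : IsMaximalFilter M) :
    ∀ m ∈ M, mvle (mvneg m) m := by
  intro m hm
  obtain ⟨n, hn⟩ := exists_nsmul_eq_top_of_mem_of_existsUnique hloc hM (hM.1.1.odot_mem hm hm)
  show oplus (mvneg (mvneg m)) m = top
  rw [mvneg_mvneg, ← oplus_self_oplus_nsmul_sq m n, hn]
  exact oplus_top _
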